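/- Let G = (V,E) be a connected finite simple graph containing no cycle of length 4, no cycle of length 5, and no cycle of length 6 (as subgraphs, not necessarily induced), with L(G) ≠ ∅. Then G is well-covered if and only if for every vertex v ∈ V \ L(G), the subgraph of G induced by D(v) is a copy of K_1 or K_2 (i.e., D(v) is either a single vertex, or a pair of adjacent vertices). -/

import Mathlib

namespace WC

variable {V : Type*}

/-- A set of vertices is independent if its elements are pairwise nonadjacent. -/
def IsIndep (G : SimpleGraph V) (S : Set V) : Prop :=
  S.Pairwise fun a b => ¬ G.Adj a b

/-- A maximal independent set: independent and not properly contained in another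
independent set. -/
def IsMaxIndep (G : SimpleGraph V) (S : Set V) : Prop :=
  IsIndep G S ∧ ∀ T : Set V, IsIndep G T → S ⊆ T → T = S

/-- A maximal independent set of the subgraph of `G` induced by `A`
(equivalently, a subset of `A`, independent in `G`, maximal among such). -/
def IsMaxIndepOn (G : SimpleGraph V) (A S : Set V) : Prop :=
  S ⊆ A ∧ IsIndep G S ∧ ∀ T : Set V, T ⊆ A → IsIndep G T → S ⊆ T → T = S

/-- The weight of a set of vertices: `w(S) = Σ_{s ∈ S} w(s)`. -/
noncomputable def wsum (w : V → ℝ) (S : Set V) : ℝ := ∑ᶠ x ∈ S, w x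

/-- `G` is `w`-well-covered if all maximal independent sets have the same weight. -/
def WWC (G : SimpleGraph V) (w : V → ℝ) : Prop :=
  ∀ S T : Set V, IsMaxIndep G S → IsMaxIndep G T → wsum w S = wsum w T

/-- `G` is well-covered if all maximal independent sets have the same cardinality. -/
def WellCovered (G : SimpleGraph V) : Prop :=
  ∀ S T : Set V, IsMaxIndep G S → IsMaxIndep G T → S.ncard = T.ncard

/-- `N(S)`, the set of vertices at distance exactly 1 from `S`. -/
def nbhd (G : SimpleGraph V) (S : Set V) : Set V :=
  {x | x ∉ S ∧ ∃ s ∈ S, G.Adj x s}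

/-- `N[S]`, the set of vertices at distance at most 1 from `S`. -/
def cnbhd (G : SimpleGraph V) (S : Set V) : Set V :=
  S ∪ {x | ∃ s ∈ S, G.Adj x s}

/-- `N₂(S)`, the set of vertices at distance exactly 2 from `S`. -/
def n2 (G : SimpleGraph V) (S : Set V) : Set V :=
  {x | x ∉ cnbhd G S ∧ ∃ y ∈ nbhd G S, G.Adj x y}

/-- `S` dominates `T` if `T ⊆ N[S]`. -/
def Dominates (G : SimpleGraph V) (S T : Set V) : Prop := T ⊆ cnbhd G S

/-- `D(v) = N(v) \ N(N₂(v))`. -/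
def dSet (G : SimpleGraph V) (v : V) : Set V :=
  G.neighborSet v \ nbhd G (n2 G {v})

/-- `L(G)`: vertices of degree 1, or of degree 2 lying on a triangle. -/
def lSet (G : SimpleGraph V) : Set V :=
  {v | (G.neighborSet v).ncard = 1 ∨
    ((G.neighborSet v).ncard = 2 ∧ ∃ a b, G.Adj v a ∧ G.Adj v b ∧ G.Adj a b)}

/-- `G` contains a cycle of length `k` as a (not necessarily induced) subgraph. -/
def HasCycleLen (G : SimpleGraph V) (k : ℕ) : Prop :=
  ∃ (u : V) (p : G.Walk u u), p.IsCycle ∧ p.length = k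

/-- A vertex is simplicial if its closed neighborhood induces a complete subgraph. -/
def Simplicial (G : SimpleGraph V) (v : V) : Prop :=
  ∀ a ∈ G.neighborSet v, ∀ b ∈ G.neighborSet v, a ≠ b → G.Adj a b

/-- `B` is an induced complete bipartite subgraph of `G` on (nonempty, disjoint)
parts `BX` and `BY`. -/
def IsCompleteBipartiteOn (G : SimpleGraph V) (BX BY : Set V) : Prop :=
  BX.Nonempty ∧ BY.Nonempty ∧ Disjoint BX BY ∧ IsIndep G BX ∧ IsIndep G BY ∧
    ∀ x ∈ BX, ∀ y ∈ BY, G.Adj x y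

/-- `B` (on parts `BX`, `BY`) is a generating subgraph of `G`: there is an
independent set `S` (a witness) such that `S ∪ BX` and `S ∪ BY` are both
maximal independent sets of `G`. -/
def IsGenerating (G : SimpleGraph V) (BX BY : Set V) : Prop :=
  ∃ S : Set V, IsIndep G S ∧ IsMaxIndep G (S ∪ BX) ∧ IsMaxIndep G (S ∪ BY)

/-- The edge `xy` is relating: there is an independent set `S` such that
`S ∪ {x}` and `S ∪ {y}` are both maximal independent sets of `G`. -/
def IsRelating (G : SimpleGraph V) (x y : V) : Prop :=
  G.Adj x y ∧ ∃ S : Set V, IsIndep G S ∧ IsMaxIndep G (S ∪ {x}) ∧ IsMaxIndep G (S ∪ {y})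

end WC

open WC

/-!
For `u ∈ L(G)` the closed neighbourhood `N[u]` is a clique containing the simplicial vertex `u`,
so every maximal independent set meets it exactly once. If every `D(z)` is a clique, two such
cliques are equal or disjoint (nonadjacent simplicial vertices with a common neighbour `z` both lie
in `D(z)`), hence every maximal independent set `M` satisfies
`|M| = #{N[u] : u ∈ L(G)} + |M ∖ ⋃ N[u]|`.

Without `C₄`, every vertex of `D(v)` lies in `L(G)`. So if each `D(v)`, `v ∉ L(G)`, is `K₁` or
`K₂`, the cliques `N[u]` cover `V` and `G` is well-covered. Conversely, well-coveredness makes each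
`D(z)` a clique, and `C₄`- and `C₅`-freeness let an edge leaving `⋃ N[u]` produce two maximal
independent sets of different sizes; so the `N[u]` cover `V`, every `v ∉ L(G)` has a neighbour
in `L(G) ∩ D(v)`, and a clique in `N(v)` has at most two vertices in a `C₄`-free graph.
-/

namespace WC

open SimpleGraph

variable {V : Type*} {G : SimpleGraph V}

theorem IsIndep.mono {S T : Set V} (hT : IsIndep G T) (hST : S ⊆ T) : IsIndep G S :=
  Set.Pairwise.mono hST hT

theorem IsIndep.insert {S : Set V} {x : V} (hS : IsIndep G S) (hx : ∀ y ∈ S, ¬ G.Adj x y) :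
    IsIndep G (insert x S) :=
  Set.Pairwise.insert hS fun y hy _ => ⟨hx y hy, fun h => hx y hy h.symm⟩

theorem IsIndep.union {S T : Set V} (hS : IsIndep G S) (hT : IsIndep G T)
    (hST : ∀ s ∈ S, ∀ t ∈ T, ¬ G.Adj s t) : IsIndep G (S ∪ T) :=
  Set.pairwise_union.2 ⟨hS, hT, fun s hs t ht _ => ⟨hST s hs t ht, fun h => hST s hs t ht h.symm⟩⟩

theorem isMaxIndep_iff {M : Set V} :
    IsMaxIndep G M ↔ IsIndep G M ∧ ∀ x ∉ M, ∃ y ∈ M, G.Adj x y := by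
  refine ⟨fun ⟨hM, hmax⟩ => ⟨hM, fun x hx => ?_⟩, fun ⟨hM, hdom⟩ => ⟨hM, fun T hT hMT => ?_⟩⟩
  · by_contra! hno
    exact hx (hmax _ (hM.insert hno) (Set.subset_insert x M) ▸ Set.mem_insert x M)
  · refine Set.Subset.antisymm (fun t ht => ?_) hMT
    by_contra htM
    obtain ⟨y, hy, hty⟩ := hdom t htM
    exact hT ht (hMT hy) (fun h => htM (h ▸ hy)) hty

theorem exists_indep_dominating [Finite V] {A S : Set V} (hSA : S ⊆ A) (hS : IsIndep G S) :
    ∃ M, S ⊆ M ∧ M ⊆ A ∧ IsIndep G M ∧ ∀ x ∈ A, x ∉ M → ∃ y ∈ M, G.Adj x y := by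
  obtain ⟨M, ⟨hSM, hMA, hM⟩, hmax⟩ := Set.Finite.exists_maximalFor id
    {T : Set V | S ⊆ T ∧ T ⊆ A ∧ IsIndep G T} (Set.toFinite _) ⟨S, subset_rfl, hSA, hS⟩
  refine ⟨M, hSM, hMA, hM, fun x hxA hxM => ?_⟩
  by_contra! hno
  exact hxM <| hmax ⟨hSM.trans (Set.subset_insert x M), Set.insert_subset hxA hMA, hM.insert hno⟩
    (Set.subset_insert x M) (Set.mem_insert x M)

theorem IsIndep.exists_isMaxIndep_superset [Finite V] {S : Set V} (hS : IsIndep G S) :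
    ∃ M, S ⊆ M ∧ IsMaxIndep G M := by
  obtain ⟨M, hSM, -, hM, hdom⟩ := exists_indep_dominating (Set.subset_univ S) hS
  exact ⟨M, hSM, isMaxIndep_iff.2 ⟨hM, fun x => hdom x (Set.mem_univ x)⟩⟩

theorem IsMaxIndep.ncard_inter_sUnion {M : Set V} {𝒦 : Set (Set V)} (hM : IsMaxIndep G M)
    (hdisj : 𝒦.PairwiseDisjoint id) (hclique : ∀ K ∈ 𝒦, G.IsClique K)
    (hsimp : ∀ K ∈ 𝒦, ∃ u ∈ K, G.neighborSet u ⊆ K) :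
    (M ∩ ⋃₀ 𝒦).ncard = 𝒦.ncard := by
  have hmeet : ∀ K ∈ 𝒦, ∃ m ∈ M, m ∈ K := by
    intro K hK
    obtain ⟨u, huK, hNu⟩ := hsimp K hK
    by_cases huM : u ∈ M
    · exact ⟨u, huM, huK⟩
    · obtain ⟨m, hm, hum⟩ := (isMaxIndep_iff.1 hM).2 u huM
      exact ⟨m, hm, hNu hum⟩
  have hunique : ∀ K ∈ 𝒦, ∀ m ∈ M, m ∈ K → ∀ m' ∈ M, m' ∈ K → m = m' := by
    intro K hK m hm hmK m' hm' hm'K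
    by_contra hne
    exact hM.1 hm hm' hne (hclique K hK hmK hm'K hne)
  refine Set.ncard_congr (fun m hm => (Set.mem_sUnion.1 hm.2).choose) (fun m hm => ?_)
    (fun m m' hm hm' hmm' => ?_) (fun K hK => ?_)
  · exact (Set.mem_sUnion.1 hm.2).choose_spec.1
  · obtain ⟨hK, hmK⟩ := (Set.mem_sUnion.1 hm.2).choose_spec
    obtain ⟨-, hm'K⟩ := (Set.mem_sUnion.1 hm'.2).choose_spec
    exact hunique _ hK m hm.1 hmK m' hm'.1 (hmm' ▸ hm'K)
  · obtain ⟨m, hm, hmK⟩ := hmeet K hK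
    refine ⟨m, ⟨hm, K, hK, hmK⟩, ?_⟩
    obtain ⟨hK', hmK'⟩ := (Set.mem_sUnion.1 (⟨K, hK, hmK⟩ : m ∈ ⋃₀ 𝒦)).choose_spec
    exact hdisj.elim_set hK' hK m hmK' hmK

theorem hasCycleLen_four {a b c d : V} (hab : G.Adj a b) (hbc : G.Adj b c) (hcd : G.Adj c d)
    (hda : G.Adj d a) (hac : a ≠ c) (hbd : b ≠ d) : HasCycleLen G 4 := by
  refine ⟨a, .cons hab (.cons hbc (.cons hcd (.cons hda .nil))), ?_, rfl⟩
  have := hab.ne; have := hbc.ne; have := hcd.ne; have := hda.ne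
  simp only [Walk.cons_isCycle_iff, Walk.cons_isPath_iff, Walk.isPath_iff_nil, Walk.nil_nil,
    Walk.support_nil, List.mem_cons, List.not_mem_nil, or_false, true_and, Walk.support_cons,
    not_or, Walk.edges_cons, Walk.edges_nil, Sym2.eq, Sym2.rel_iff', Prod.mk.injEq,
    Prod.swap_prod_mk, and_true, not_and]
  grind

theorem hasCycleLen_five {a b c d e : V} (hab : G.Adj a b) (hbc : G.Adj b c) (hcd : G.Adj c d)
    (hde : G.Adj d e) (hea : G.Adj e a) (hac : a ≠ c) (had : a ≠ d) (hbd : b ≠ d) (hbe : b ≠ e)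
    (hce : c ≠ e) : HasCycleLen G 5 := by
  refine ⟨a, .cons hab (.cons hbc (.cons hcd (.cons hde (.cons hea .nil)))), ?_, rfl⟩
  have := hab.ne; have := hbc.ne; have := hcd.ne; have := hde.ne; have := hea.ne
  simp only [Walk.cons_isCycle_iff, Walk.cons_isPath_iff, Walk.isPath_iff_nil, Walk.nil_nil,
    Walk.support_nil, List.mem_cons, List.not_mem_nil, or_false, true_and, Walk.support_cons,
    not_or, Walk.edges_cons, Walk.edges_nil, Sym2.eq, Sym2.rel_iff', Prod.mk.injEq,
    Prod.swap_prod_mk, and_true, not_and]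
  grind

def closedNbhd (G : SimpleGraph V) (u : V) : Set V := insert u (G.neighborSet u)

theorem mem_closedNbhd {u x : V} : x ∈ closedNbhd G u ↔ x = u ∨ G.Adj u x := Iff.rfl

theorem Simplicial.isClique_closedNbhd {u : V} (hu : Simplicial G u) :
    G.IsClique (closedNbhd G u) := by
  rintro x (rfl | hx) y (rfl | hy) hxy
  exacts [absurd rfl hxy, hy, hx.symm, hu x hx y hy hxy]

theorem Simplicial.closedNbhd_subset {u u' : V} (hu : Simplicial G u) (h : G.Adj u u') :
    closedNbhd G u ⊆ closedNbhd G u' := fun x hx => by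
  by_cases hx' : x = u'
  · exact Or.inl hx'
  · exact Or.inr (hu.isClique_closedNbhd (Or.inr h) hx (Ne.symm hx'))

theorem mem_dSet_iff {a v : V} :
    a ∈ dSet G v ↔ G.Adj v a ∧ ∀ x, G.Adj a x → x = v ∨ G.Adj v x := by
  simp only [dSet, nbhd, n2, cnbhd, Set.mem_sdiff, mem_neighborSet, Set.mem_ofPred_eq,
    Set.mem_union, Set.mem_singleton_iff, exists_eq_left]
  grind [G.adj_comm, G.ne_of_adj]

theorem Simplicial.mem_dSet {u v : V} (hu : Simplicial G u) (h : G.Adj v u) : u ∈ dSet G v :=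
  mem_dSet_iff.2 ⟨h, fun x hx => or_iff_not_imp_left.2 fun hxv =>
    (hu v h.symm x hx (Ne.symm hxv))⟩

theorem Simplicial.closedNbhd_eq_of_mem {u u' z : V} (hu : Simplicial G u)
    (hu' : Simplicial G u') (hD : ∀ z, G.IsClique (dSet G z))
    (hz : z ∈ closedNbhd G u) (hz' : z ∈ closedNbhd G u') : closedNbhd G u = closedNbhd G u' := by
  by_cases h : u = u' ∨ G.Adj u u'
  · rcases h with rfl | h
    · rfl
    · exact (hu.closedNbhd_subset h).antisymm (hu'.closedNbhd_subset h.symm)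
  obtain ⟨hne, hnadj⟩ := not_or.1 h
  have hzu : G.Adj u z := (mem_closedNbhd.1 hz).resolve_left fun h => by
    subst h
    rcases hz' with h' | h'
    exacts [hne h', hnadj h'.symm]
  have hzu' : G.Adj u' z := (mem_closedNbhd.1 hz').resolve_left fun h => by
    subst h
    rcases hz with h' | h'
    exacts [hne h'.symm, hnadj h']
  exact absurd (hD z (hu.mem_dSet hzu.symm) (hu'.mem_dSet hzu'.symm) hne) hnadj

theorem simplicial_of_mem_lSet {u : V} (hu : u ∈ lSet G) : Simplicial G u := by
  intro a ha b hb hab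
  rcases hu with h1 | ⟨h2, c, d, hc, hd, hcd⟩
  · obtain ⟨s, hs⟩ := Set.ncard_eq_one.1 h1
    rw [hs] at ha hb
    exact absurd (ha.trans hb.symm) hab
  · obtain ⟨x, y, -, hxy⟩ := Set.ncard_eq_two.1 h2
    have hc' : c ∈ G.neighborSet u := hc
    have hd' : d ∈ G.neighborSet u := hd
    rw [hxy] at ha hb hc' hd'
    simp only [Set.mem_insert_iff, Set.mem_singleton_iff] at ha hb hc' hd'
    grind [G.adj_comm, G.ne_of_adj]

theorem mem_lSet_of_mem_dSet (h4 : ¬ HasCycleLen G 4) {a v : V} (ha : a ∈ dSet G v) :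
    a ∈ lSet G := by
  obtain ⟨hva, hN⟩ := mem_dSet_iff.1 ha
  by_cases hone : G.neighborSet a = {v}
  · exact Or.inl (by rw [hone, Set.ncard_singleton])
  obtain ⟨t, hat, htv⟩ : ∃ t, G.Adj a t ∧ t ≠ v := by
    by_contra! h
    exact hone (Set.eq_singleton_iff_unique_mem.2 ⟨hva.symm, h⟩)
  have hvt : G.Adj v t := (hN t hat).resolve_left htv
  have hNa : G.neighborSet a = {v, t} := by
    ext x
    simp only [mem_neighborSet, Set.mem_insert_iff, Set.mem_singleton_iff]
    refine ⟨fun hax => ?_, by rintro (rfl | rfl) <;> [exact hva.symm; exact hat]⟩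
    by_contra! hx
    exact h4 (hasCycleLen_four hvt hat.symm hax ((hN x hax).resolve_left hx.1).symm hva.ne
      (Ne.symm hx.2))
  exact Or.inr ⟨by rw [hNa, Set.ncard_pair (Ne.symm htv)], v, t, hva.symm, hat, hvt⟩

def lCliques (G : SimpleGraph V) : Set (Set V) := closedNbhd G '' lSet G

theorem mem_sUnion_lCliques {u x : V} (hu : u ∈ lSet G) (hx : x ∈ closedNbhd G u) :
    x ∈ ⋃₀ lCliques G :=
  ⟨_, ⟨u, hu, rfl⟩, hx⟩

theorem pairwiseDisjoint_lCliques (hD : ∀ z, G.IsClique (dSet G z)) :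
    (lCliques G).PairwiseDisjoint id := by
  rintro _ ⟨u, hu, rfl⟩ _ ⟨u', hu', rfl⟩ hne
  exact Set.disjoint_left.2 fun z hz hz' => hne <|
    (simplicial_of_mem_lSet hu).closedNbhd_eq_of_mem (simplicial_of_mem_lSet hu') hD hz hz'

theorem IsMaxIndep.ncard_eq [Finite V] (hD : ∀ z, G.IsClique (dSet G z)) {M : Set V}
    (hM : IsMaxIndep G M) : M.ncard = (lCliques G).ncard + (M \ ⋃₀ lCliques G).ncard := by
  rw [← Set.ncard_inter_add_ncard_sdiff_eq_ncard M (⋃₀ lCliques G)]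
  congr 1
  refine hM.ncard_inter_sUnion (pairwiseDisjoint_lCliques hD) ?_ ?_
  · rintro _ ⟨u, hu, rfl⟩
    exact (simplicial_of_mem_lSet hu).isClique_closedNbhd
  · rintro _ ⟨u, -, rfl⟩
    exact ⟨u, Set.mem_insert u _, Set.subset_insert u _⟩

/-- If `a, b ∈ D(z)` were independent, take `J` maximal independent outside `N[z]`: then
`J ∪ {z}` is maximal independent, and so is `J ∪ K` for a maximal independent `K ⊇ {a, b}` among
the neighbours of `z` with no neighbour in `J` (the neighbours of `a, b` lie in `N[z]`). -/
theorem isClique_dSet_of_wellCovered [Finite V] (hwc : WellCovered G) (z : V) :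
    G.IsClique (dSet G z) := by
  intro a ha b hb hne
  by_contra hab
  obtain ⟨J, -, hJW, hJ, hJdom⟩ := exists_indep_dominating (G := G) (A := (closedNbhd G z)ᶜ)
    (Set.empty_subset _) (Set.pairwise_empty _)
  set F := {x | G.Adj z x ∧ ∀ j ∈ J, ¬ G.Adj x j}
  have hF : ∀ {x}, x ∈ dSet G z → x ∈ F := fun hx =>
    ⟨(mem_dSet_iff.1 hx).1, fun j hj hxj => hJW hj ((mem_dSet_iff.1 hx).2 j hxj)⟩
  have habF : {a, b} ⊆ F := Set.insert_subset (hF ha) (Set.singleton_subset_iff.2 (hF hb))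
  have habI : IsIndep G {a, b} := Set.pairwise_pair.2 fun _ => ⟨hab, fun h => hab h.symm⟩
  obtain ⟨K, habK, hKF, hK, hKdom⟩ := exists_indep_dominating habF habI
  have hzJ : ∀ y ∈ J, ¬ G.Adj z y := fun y hy hzy => hJW hy (Or.inr hzy)
  have hI1 : IsMaxIndep G (insert z J) := by
    refine isMaxIndep_iff.2 ⟨hJ.insert hzJ, fun x hx => ?_⟩
    by_cases hxz : x ∈ closedNbhd G z
    · refine ⟨z, Set.mem_insert z J, (hxz.resolve_left ?_).symm⟩
      rintro rfl
      exact hx (Set.mem_insert x J)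
    · obtain ⟨y, hy, hxy⟩ := hJdom x hxz fun h => hx (Set.mem_insert_of_mem z h)
      exact ⟨y, Set.mem_insert_of_mem z hy, hxy⟩
  have hI2 : IsMaxIndep G (J ∪ K) := by
    refine isMaxIndep_iff.2 ⟨hJ.union hK fun j hj k hk hjk => (hKF hk).2 j hj hjk.symm,
      fun x hx => ?_⟩
    obtain ⟨hxJ, hxK⟩ := not_or.1 hx
    by_cases hxz : x ∈ closedNbhd G z
    · rcases hxz with rfl | hzx
      · exact ⟨a, Or.inr (habK (Set.mem_insert a _)), (mem_dSet_iff.1 ha).1⟩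
      by_cases hxF : x ∈ F
      · obtain ⟨y, hy, hxy⟩ := hKdom x hxF hxK
        exact ⟨y, Or.inr hy, hxy⟩
      · obtain ⟨j, hj, hxj⟩ : ∃ j ∈ J, G.Adj x j := by
          by_contra! h
          exact hxF ⟨hzx, h⟩
        exact ⟨j, Or.inl hj, hxj⟩
    · obtain ⟨y, hy, hxy⟩ := hJdom x hxz hxJ
      exact ⟨y, Or.inl hy, hxy⟩
  have hcard := hwc _ _ hI1 hI2
  have hK2 : 2 ≤ K.ncard := Set.ncard_pair hne ▸ Set.ncard_le_ncard habK
  have hJK : Disjoint J K := Set.disjoint_left.2 fun x hxJ hxK => hJW hxJ (Or.inr (hKF hxK).1)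
  rw [Set.ncard_insert_of_notMem (fun h => hJW h (Or.inl rfl)), Set.ncard_union_eq hJK] at hcard
  omega

def IsVertexOrEdge (G : SimpleGraph V) (S : Set V) : Prop :=
  (∃ a, S = {a}) ∨ (∃ a b, a ≠ b ∧ G.Adj a b ∧ S = {a, b})

theorem IsVertexOrEdge.isClique {S : Set V} (h : IsVertexOrEdge G S) : G.IsClique S := by
  rcases h with ⟨a, rfl⟩ | ⟨a, b, -, hab, rfl⟩
  exacts [Set.pairwise_singleton _ _, Set.pairwise_pair.2 fun _ => ⟨hab, hab.symm⟩]

theorem IsVertexOrEdge.nonempty {S : Set V} (h : IsVertexOrEdge G S) : S.Nonempty := by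
  rcases h with ⟨a, rfl⟩ | ⟨a, b, -, -, rfl⟩
  exacts [Set.singleton_nonempty a, Set.insert_nonempty a _]

/-- Three pairwise adjacent neighbours `a, b, c` of `v` would give the `C₄` `a b c v`. -/
theorem isVertexOrEdge_of_isClique (h4 : ¬ HasCycleLen G 4) {v a : V} {S : Set V}
    (hS : G.IsClique S) (hSv : S ⊆ G.neighborSet v) (ha : a ∈ S) : IsVertexOrEdge G S := by
  by_cases hone : ∀ b ∈ S, b = a
  · exact Or.inl ⟨a, Set.eq_singleton_iff_unique_mem.2 ⟨ha, hone⟩⟩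
  push Not at hone
  obtain ⟨b, hb, hba⟩ := hone
  refine Or.inr ⟨a, b, hba.symm, hS ha hb hba.symm, Set.Subset.antisymm (fun c hc => ?_)
    (Set.insert_subset ha (Set.singleton_subset_iff.2 hb))⟩
  by_contra! hc'
  simp only [Set.mem_insert_iff, Set.mem_singleton_iff, not_or] at hc'
  exact h4 (hasCycleLen_four (hS ha hb hba.symm) (hS hb hc (Ne.symm hc'.2)) (hSv hc).symm (hSv ha)
    (Ne.symm hc'.1) (hSv hb).ne')

theorem isClique_dSet_of_isVertexOrEdge (hstar : ∀ v ∉ lSet G, IsVertexOrEdge G (dSet G v))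
    (z : V) : G.IsClique (dSet G z) := by
  by_cases hz : z ∈ lSet G
  · exact fun a ha b hb => simplicial_of_mem_lSet hz a (mem_dSet_iff.1 ha).1 b (mem_dSet_iff.1 hb).1
  · exact (hstar z hz).isClique

theorem sUnion_lCliques_eq_univ_of_isVertexOrEdge (h4 : ¬ HasCycleLen G 4)
    (hstar : ∀ v ∉ lSet G, IsVertexOrEdge G (dSet G v)) : ⋃₀ lCliques G = Set.univ := by
  refine Set.eq_univ_of_forall fun v => ?_
  by_cases hv : v ∈ lSet G
  · exact mem_sUnion_lCliques hv (Set.mem_insert v _)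
  · obtain ⟨a, ha⟩ := (hstar v hv).nonempty
    exact mem_sUnion_lCliques (mem_lSet_of_mem_dSet h4 ha) (Or.inr (mem_dSet_iff.1 ha).1.symm)

/-- Since `x₀ ∉ ⋃ L-cliques`, `D(x₀) = ∅`, so each neighbour `w` of `x₀` has a neighbour `f w` at
distance 2 from `x₀`. The set `{q} ∪ f(W)`, `W` the neighbours of `x₀` outside the L-cliques and
not adjacent to `q`, is independent: an edge would close a `C₄` through `q` or a `C₅` through `x₀`.
Any maximal independent extension of it works. -/
theorem exists_isMaxIndep_of_adj_not_mem_sUnion [Finite V] (h4 : ¬ HasCycleLen G 4)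
    (h5 : ¬ HasCycleLen G 5) {q x₀ : V} (hq : q ∈ ⋃₀ lCliques G) (hx₀ : x₀ ∉ ⋃₀ lCliques G)
    (hqx₀ : G.Adj q x₀) :
    ∃ M, IsMaxIndep G M ∧ q ∈ M ∧ ∀ y ∈ M, y ∉ ⋃₀ lCliques G → ¬ G.Adj x₀ y := by
  set T := ⋃₀ lCliques G
  have hstep : ∀ w, ∃ s, G.Adj x₀ w → G.Adj w s ∧ s ≠ x₀ ∧ ¬ G.Adj x₀ s := by
    intro w
    by_cases hw : G.Adj x₀ w
    · have hwD : w ∉ dSet G x₀ := fun hwD =>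
        hx₀ (mem_sUnion_lCliques (mem_lSet_of_mem_dSet h4 hwD) (Or.inr hw.symm))
      obtain ⟨s, hws, hs⟩ : ∃ s, G.Adj w s ∧ ¬ (s = x₀ ∨ G.Adj x₀ s) := by
        by_contra! h
        exact hwD (mem_dSet_iff.2 ⟨hw, h⟩)
      exact ⟨s, fun _ => ⟨hws, not_or.1 hs⟩⟩
    · exact ⟨w, fun h => absurd h hw⟩
  choose f hf using hstep
  set W := {w | G.Adj x₀ w ∧ w ∉ T ∧ ¬ G.Adj q w}
  have hqW : ∀ y ∈ f '' W, ¬ G.Adj q y := by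
    rintro _ ⟨w, hw, rfl⟩ hq'
    obtain ⟨hwf, hfx, -⟩ := hf w hw.1
    exact h4 (hasCycleLen_four hqx₀ hw.1 hwf hq'.symm (fun h => hw.2.1 (h ▸ hq)) (Ne.symm hfx))
  have hWW : IsIndep G (f '' W) := by
    rintro _ ⟨w, hw, rfl⟩ _ ⟨w', hw', rfl⟩ hne hadj
    obtain ⟨hwf, hfx, hxf⟩ := hf w hw.1
    obtain ⟨hwf', hfx', hxf'⟩ := hf w' hw'.1
    exact h5 (hasCycleLen_five hw.1 hwf hadj hwf'.symm hw'.1.symm (Ne.symm hfx) (Ne.symm hfx')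
      (fun h => hxf' (h ▸ hw.1)) (fun h => hne (h ▸ rfl)) (fun h => hxf (h ▸ hw'.1)))
  obtain ⟨M, hPM, hM⟩ := (hWW.insert hqW).exists_isMaxIndep_superset
  have hqM : q ∈ M := hPM (Set.mem_insert q _)
  refine ⟨M, hM, hqM, fun y hy hyT hxy => ?_⟩
  by_cases hqy : G.Adj q y
  · exact hM.1 hqM hy hqy.ne hqy
  · have hfy : f y ∈ M := hPM (Set.mem_insert_of_mem q ⟨y, ⟨hxy, hyT, hqy⟩, rfl⟩)
    have hyf := (hf y hxy).1
    exact hM.1 hy hfy hyf.ne hyf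

/-- Walk from an L-vertex to a vertex outside the L-cliques and take the boundary edge `q x₀`.
With `M₁` as above, any maximal independent `M₂ ⊇ {x₀} ∪ (M₁ ∖ ⋃ L-cliques)` has more vertices
outside the L-cliques than `M₁`, hence `|M₂| > |M₁|`. -/
theorem sUnion_lCliques_eq_univ_of_wellCovered [Finite V] (hwc : WellCovered G)
    (hconn : G.Connected) (h4 : ¬ HasCycleLen G 4) (h5 : ¬ HasCycleLen G 5)
    (hL : (lSet G).Nonempty) : ⋃₀ lCliques G = Set.univ := by
  refine Set.eq_univ_of_forall fun x => ?_
  by_contra hx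
  obtain ⟨u, hu⟩ := hL
  obtain ⟨d, -, hqT, hx₀T⟩ := (hconn.preconnected u x).some.exists_boundary_dart _
    (mem_sUnion_lCliques hu (Set.mem_insert u _)) hx
  obtain ⟨M₁, hM₁, hqM₁, hM₁x₀⟩ :=
    exists_isMaxIndep_of_adj_not_mem_sUnion h4 h5 hqT hx₀T d.adj
  have hx₀M₁ : d.snd ∉ M₁ := fun h => hM₁.1 hqM₁ h d.adj.ne d.adj
  have hI : IsIndep G (insert d.snd (M₁ \ ⋃₀ lCliques G)) :=
    (hM₁.1.mono Set.sdiff_subset).insert fun y hy => hM₁x₀ y hy.1 hy.2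
  obtain ⟨M₂, hIM₂, hM₂⟩ := hI.exists_isMaxIndep_superset
  have hlt : (M₁ \ ⋃₀ lCliques G).ncard < (M₂ \ ⋃₀ lCliques G).ncard := by
    refine Set.ncard_lt_ncard ⟨fun y hy => ⟨hIM₂ (Set.mem_insert_of_mem _ hy), hy.2⟩, fun h => ?_⟩
    exact hx₀M₁ (h ⟨hIM₂ (Set.mem_insert _ _), hx₀T⟩).1
  have hD := isClique_dSet_of_wellCovered hwc
  have hcard := hwc M₁ M₂ hM₁ hM₂
  rw [hM₁.ncard_eq hD, hM₂.ncard_eq hD] at hcard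
  omega

theorem isVertexOrEdge_dSet_of_wellCovered [Finite V] (hwc : WellCovered G)
    (hconn : G.Connected) (h4 : ¬ HasCycleLen G 4) (h5 : ¬ HasCycleLen G 5)
    (hL : (lSet G).Nonempty) {v : V} (hv : v ∉ lSet G) : IsVertexOrEdge G (dSet G v) := by
  obtain ⟨_, ⟨u, hu, rfl⟩, hvu⟩ :=
    (sUnion_lCliques_eq_univ_of_wellCovered hwc hconn h4 h5 hL).symm ▸ Set.mem_univ v
  have huv : G.Adj v u := (hvu.resolve_left fun h => hv (h ▸ hu)).symm
  exact isVertexOrEdge_of_isClique h4 (isClique_dSet_of_wellCovered hwc v)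
    (fun a ha => (mem_dSet_iff.1 ha).1) ((simplicial_of_mem_lSet hu).mem_dSet huv)

theorem wellCovered_of_isVertexOrEdge [Finite V] (h4 : ¬ HasCycleLen G 4)
    (hstar : ∀ v ∉ lSet G, IsVertexOrEdge G (dSet G v)) : WellCovered G := by
  intro S T hS hT
  have hD := isClique_dSet_of_isVertexOrEdge hstar
  rw [hS.ncard_eq hD, hT.ncard_eq hD, sUnion_lCliques_eq_univ_of_isVertexOrEdge h4 hstar,
    Set.sdiff_univ, Set.sdiff_univ]

end WC

open WC

theorem stmt_13_general {V : Type*} [Fintype V] (G : SimpleGraph V) (hconn : G.Connected)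
    (h4 : ¬ HasCycleLen G 4) (h5 : ¬ HasCycleLen G 5)
    (hL : (lSet G).Nonempty) :
    WellCovered G ↔
      ∀ v : V, v ∉ lSet G →
        (∃ a : V, dSet G v = {a}) ∨
        (∃ a b : V, a ≠ b ∧ G.Adj a b ∧ dSet G v = {a, b}) :=
  ⟨fun hwc _ hv => isVertexOrEdge_dSet_of_wellCovered hwc hconn h4 h5 hL hv,
    wellCovered_of_isVertexOrEdge h4⟩

/-- in a connected graph with no `C₄`, `C₅`, `C₆` and `L(G) ≠ ∅`,
`G` is well-covered iff for every `v ∉ L(G)` the subgraph induced by `D(v)` is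
a copy of `K₁` or `K₂`. -/
theorem stmt_13 {V : Type*} [Fintype V] (G : SimpleGraph V) (hconn : G.Connected)
    (h4 : ¬ HasCycleLen G 4) (h5 : ¬ HasCycleLen G 5) (h6 : ¬ HasCycleLen G 6)
    (hL : (lSet G).Nonempty) :
    WellCovered G ↔
      ∀ v : V, v ∉ lSet G →
        (∃ a : V, dSet G v = {a}) ∨
        (∃ a b : V, a ≠ b ∧ G.Adj a b ∧ dSet G v = {a, b}) :=
  stmt_13_general G hconn h4 h5 hL
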